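/- arXiv:1607.07705 — 2 statements merged into one kernel-verified Lean document; each statement's English description precedes it below -/
import Mathlib

section
/- Let C : ℝ^n → ℝ be C², nonnegative, with C(θ*) = 0, and suppose the Hessian H = ∇²C(θ*) is positive definite. Then the multiscale sloppiness S(δ) = max{C(θ) : ‖θ−θ*‖ ≤ δ} / min{C(θ) : ‖θ−θ*‖ = δ} tends, as δ → 0⁺, to the condition number of H, i.e. to λ_max(H)/λ_min(H). -/
/-!
Since `C` is minimal at `θs`, the second-order Taylor expansion there reads
`C (θs + v) = ½ vᵀ H v + o(‖v‖²)`. The quadratic form satisfies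
`λ_min ‖v‖² ≤ vᵀ H v ≤ λ_max ‖v‖²`, with equality at the corresponding eigenvectors, so after
division by `δ²` the maximum of `C` over the closed `δ`-ball tends to `λ_max / 2` and its minimum
over the `δ`-sphere tends to `λ_min / 2`.
-/

open Filter Topology Asymptotics Metric

theorem ContDiffAt.isLittleO_taylor_two {E F : Type*} [NormedAddCommGroup E] [NormedSpace ℝ E]
    [NormedAddCommGroup F] [NormedSpace ℝ F] {f : E → F} {x₀ : E} (hf : ContDiffAt ℝ 2 f x₀) :
    (fun x => f x - f x₀ - fderiv ℝ f x₀ (x - x₀) -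
        (2⁻¹ : ℝ) • iteratedFDeriv ℝ 2 f x₀ ![x - x₀, x - x₀]) =o[𝓝 x₀]
      fun x => ‖x - x₀‖ ^ 2 := by
  set B := fderiv ℝ (fderiv ℝ f) x₀
  have hB : HasFDerivAt (fderiv ℝ f) B x₀ :=
    ((hf.fderiv_right (m := 1) le_rfl).differentiableAt one_ne_zero).hasFDerivAt
  -- symmetry of `B` makes `B u` the derivative of `u ↦ ½ B u u`
  have hsymm : ∀ v w, B v w = B w v := hf.isSymmSndFDerivAt (by simp)
  obtain ⟨r, hr, hball⟩ := eventually_nhds_iff_ball.1 (hf.eventually (by simp))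
  have hnhds : 𝓝[ball x₀ r] x₀ = 𝓝 x₀ := nhdsWithin_eq_nhds.2 (ball_mem_nhds x₀ hr)
  set g : E → F := fun x => f x - fderiv ℝ f x₀ (x - x₀) - (2⁻¹ : ℝ) • B (x - x₀) (x - x₀)
  have hg : ∀ x ∈ ball x₀ r,
      HasFDerivAt g (fderiv ℝ f x - fderiv ℝ f x₀ - B (x - x₀)) x := by
    intro x hx
    have hu : HasFDerivAt (fun x => x - x₀) (ContinuousLinearMap.id ℝ E) x :=
      (hasFDerivAt_id x).sub_const x₀
    have hquad := ((B.hasFDerivAt.comp x hu).clm_apply hu).const_smul (2⁻¹ : ℝ)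
    refine ((((hball x hx).differentiableAt (by simp)).hasFDerivAt.sub
      ((fderiv ℝ f x₀).hasFDerivAt.comp x hu)).sub hquad).congr_fderiv ?_
    ext h
    simp only [sub_apply, ContinuousLinearMap.comp_id, smul_apply, add_apply,
      ContinuousLinearMap.flip_apply, Function.comp_apply, hsymm h (x - x₀)]
    module
  have hg' : (fun x => fderiv ℝ f x - fderiv ℝ f x₀ - B (x - x₀)) =o[𝓝 x₀]
      fun x => ‖x - x₀‖ ^ 1 := by
    simpa only [pow_one] using hB.isLittleO.norm_right
  -- `g x - g x₀` is exactly the Taylor remainder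
  have hrem := (convex_ball x₀ r).isLittleO_pow_succ (mem_ball_self hr)
    (fun x hx => (hg x hx).hasFDerivWithinAt) (by rwa [hnhds])
  rw [hnhds] at hrem
  refine hrem.congr_left fun x => ?_
  simp only [g, iteratedFDeriv_two_apply, sub_self, map_zero, smul_zero, sub_zero,
    Matrix.cons_val_zero, Matrix.cons_val_one]
  abel

namespace Matrix.IsHermitian

variable {ι : Type*} [Fintype ι] [DecidableEq ι] {H : Matrix ι ι ℝ} (hH : H.IsHermitian)

lemma eigenvectorBasis_repr_mulVec (v : EuclideanSpace ℝ ι) (j : ι) :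
    hH.eigenvectorBasis.repr (WithLp.toLp 2 (H *ᵥ v)) j =
      hH.eigenvalues j * hH.eigenvectorBasis.repr v j := by
  have hT : Hᵀ = H := hH
  simp only [OrthonormalBasis.repr_apply_apply, EuclideanSpace.inner_eq_star_dotProduct,
    star_trivial]
  rw [dotProduct_comm, dotProduct_mulVec, ← mulVec_transpose, hT, hH.mulVec_eigenvectorBasis,
    smul_dotProduct, smul_eq_mul, dotProduct_comm]

lemma sum_mul_mul_eq_sum_eigenvalues_mul_sq (v : EuclideanSpace ℝ ι) :
    ∑ i, ∑ j, v i * H i j * v j = ∑ j, hH.eigenvalues j * hH.eigenvectorBasis.repr v j ^ 2 := by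
  have hquad : ∑ i, ∑ j, v i * H i j * v j = inner ℝ v (WithLp.toLp 2 (H *ᵥ v)) := by
    simp [PiLp.inner_apply, mulVec, dotProduct, Finset.mul_sum, mul_assoc, mul_comm, mul_left_comm]
  rw [hquad, ← hH.eigenvectorBasis.repr.inner_map_map, PiLp.inner_apply]
  refine Finset.sum_congr rfl fun j _ => ?_
  rw [eigenvectorBasis_repr_mulVec]
  simp only [RCLike.inner_apply, conj_trivial]
  ring

lemma norm_sq_eq_sum_eigenvectorBasis_repr_sq (v : EuclideanSpace ℝ ι) :
    ‖v‖ ^ 2 = ∑ j, hH.eigenvectorBasis.repr v j ^ 2 := by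
  rw [← hH.eigenvectorBasis.repr.norm_map v, EuclideanSpace.norm_sq_eq]
  simp only [Real.norm_eq_abs, sq_abs]

lemma iInf_eigenvalues_mul_norm_sq_le (v : EuclideanSpace ℝ ι) :
    (⨅ i, hH.eigenvalues i) * ‖v‖ ^ 2 ≤ ∑ i, ∑ j, v i * H i j * v j := by
  rw [hH.sum_mul_mul_eq_sum_eigenvalues_mul_sq, hH.norm_sq_eq_sum_eigenvectorBasis_repr_sq,
    Finset.mul_sum]
  gcongr with j
  exact ciInf_le (Set.finite_range _).bddBelow j

lemma sum_mul_mul_le_iSup_eigenvalues_mul_norm_sq (v : EuclideanSpace ℝ ι) :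
    ∑ i, ∑ j, v i * H i j * v j ≤ (⨆ i, hH.eigenvalues i) * ‖v‖ ^ 2 := by
  rw [hH.sum_mul_mul_eq_sum_eigenvalues_mul_sq, hH.norm_sq_eq_sum_eigenvectorBasis_repr_sq,
    Finset.mul_sum]
  gcongr with j
  exact le_ciSup (Set.finite_range _).bddAbove j

lemma sum_mul_mul_smul_eigenvectorBasis (t : ℝ) (k : ι) :
    ∑ i, ∑ j, (t • hH.eigenvectorBasis k) i * H i j * (t • hH.eigenvectorBasis k) j =
      hH.eigenvalues k * t ^ 2 := by
  rw [hH.sum_mul_mul_eq_sum_eigenvalues_mul_sq, Finset.sum_eq_single k]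
  · simp
  · intro j _ hj
    simp [hj]
  · simp

lemma norm_smul_eigenvectorBasis (t : ℝ) (k : ι) : ‖t • hH.eigenvectorBasis k‖ = |t| := by
  rw [norm_smul, hH.eigenvectorBasis.orthonormal.1 k, Real.norm_eq_abs, mul_one]

end Matrix.IsHermitian

section Sloppiness

variable {E : Type*} [NormedAddCommGroup E]

noncomputable def maxOnClosedBall (f : E → ℝ) (x₀ : E) (δ : ℝ) : ℝ :=
  sSup {y | ∃ x, ‖x - x₀‖ ≤ δ ∧ y = f x}

noncomputable def minOnSphere (f : E → ℝ) (x₀ : E) (δ : ℝ) : ℝ :=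
  sInf {y | ∃ x, ‖x - x₀‖ = δ ∧ y = f x}

noncomputable def sloppiness (f : E → ℝ) (x₀ : E) (δ : ℝ) : ℝ :=
  maxOnClosedBall f x₀ δ / minOnSphere f x₀ δ

lemma tendsto_div_sq_of_eventually_abs_sub_le {s : ℝ → ℝ} {c : ℝ}
    (h : ∀ ε > 0, ∀ᶠ δ in 𝓝[>] 0, |s δ - c * δ ^ 2| ≤ ε * δ ^ 2) :
    Tendsto (fun δ => s δ / δ ^ 2) (𝓝[>] 0) (𝓝 c) := by
  refine Metric.tendsto_nhds.2 fun ε hε => ?_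
  filter_upwards [h (ε / 2) (half_pos hε), self_mem_nhdsWithin] with δ hδ (hδpos : 0 < δ)
  have hδ2 : 0 < δ ^ 2 := by positivity
  rw [Real.dist_eq, show s δ / δ ^ 2 - c = (s δ - c * δ ^ 2) / δ ^ 2 by field_simp,
    abs_div, abs_of_pos hδ2, div_lt_iff₀ hδ2]
  linarith [mul_lt_mul_of_pos_right (half_lt_self hε) hδ2]

lemma eventually_forall_abs_le_mul_sq {R : E → ℝ} {x₀ : E}
    (hR : R =o[𝓝 x₀] fun x => ‖x - x₀‖ ^ 2) {ε : ℝ} (hε : 0 < ε) :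
    ∀ᶠ δ in 𝓝[>] 0, ∀ x, ‖x - x₀‖ ≤ δ → |R x| ≤ ε * δ ^ 2 := by
  obtain ⟨r, hr, hball⟩ := eventually_nhds_iff_ball.1 (hR.def hε)
  filter_upwards [Ioo_mem_nhdsGT hr] with δ ⟨_, hδr⟩ x hx
  calc |R x| ≤ ε * ‖x - x₀‖ ^ 2 := by
        simpa using hball x (by rw [mem_ball, dist_eq_norm]; linarith)
    _ ≤ ε * δ ^ 2 := by gcongr

variable {f q : E → ℝ} {x₀ : E}

lemma tendsto_maxOnClosedBall_div_sq {M : ℝ} (hM : 0 ≤ M)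
    (hf : (fun x => f x - q (x - x₀)) =o[𝓝 x₀] fun x => ‖x - x₀‖ ^ 2)
    (hq : ∀ v, q v ≤ M * ‖v‖ ^ 2) (hq_attained : ∀ r > 0, ∃ v, ‖v‖ = r ∧ M * r ^ 2 ≤ q v) :
    Tendsto (fun δ => maxOnClosedBall f x₀ δ / δ ^ 2) (𝓝[>] 0) (𝓝 M) := by
  refine tendsto_div_sq_of_eventually_abs_sub_le fun ε hε => ?_
  filter_upwards [eventually_forall_abs_le_mul_sq hf hε, self_mem_nhdsWithin]
    with δ hδ (hδpos : 0 < δ)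
  have hub : ∀ y ∈ {y | ∃ x, ‖x - x₀‖ ≤ δ ∧ y = f x}, y ≤ M * δ ^ 2 + ε * δ ^ 2 := by
    rintro - ⟨x, hx, rfl⟩
    have hqx : q (x - x₀) ≤ M * δ ^ 2 := (hq _).trans (by gcongr)
    linarith [(abs_le.1 (hδ x hx)).2]
  obtain ⟨v, hv, hqv⟩ := hq_attained δ hδpos
  have hlb : M * δ ^ 2 - ε * δ ^ 2 ≤ f (x₀ + v) := by
    have := hδ (x₀ + v) (by simp [hv])
    rw [add_sub_cancel_left] at this
    linarith [(abs_le.1 this).1]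
  have hmax_le : maxOnClosedBall f x₀ δ ≤ M * δ ^ 2 + ε * δ ^ 2 :=
    csSup_le ⟨f x₀, x₀, by simp [hδpos.le], rfl⟩ hub
  have hmax_ge : f (x₀ + v) ≤ maxOnClosedBall f x₀ δ :=
    le_csSup ⟨_, hub⟩ ⟨x₀ + v, by simp [hv], rfl⟩
  rw [abs_le]
  constructor <;> linarith

lemma tendsto_minOnSphere_div_sq {m : ℝ}
    (hf : (fun x => f x - q (x - x₀)) =o[𝓝 x₀] fun x => ‖x - x₀‖ ^ 2)
    (hq : ∀ v, m * ‖v‖ ^ 2 ≤ q v) (hq_attained : ∀ r > 0, ∃ v, ‖v‖ = r ∧ q v ≤ m * r ^ 2) :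
    Tendsto (fun δ => minOnSphere f x₀ δ / δ ^ 2) (𝓝[>] 0) (𝓝 m) := by
  refine tendsto_div_sq_of_eventually_abs_sub_le fun ε hε => ?_
  filter_upwards [eventually_forall_abs_le_mul_sq hf hε, self_mem_nhdsWithin]
    with δ hδ (hδpos : 0 < δ)
  have hlb : ∀ y ∈ {y | ∃ x, ‖x - x₀‖ = δ ∧ y = f x}, m * δ ^ 2 - ε * δ ^ 2 ≤ y := by
    rintro - ⟨x, hx, rfl⟩
    have hqx : m * δ ^ 2 ≤ q (x - x₀) := hx ▸ hq _
    linarith [(abs_le.1 (hδ x hx.le)).1]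
  obtain ⟨v, hv, hqv⟩ := hq_attained δ hδpos
  have hub : f (x₀ + v) ≤ m * δ ^ 2 + ε * δ ^ 2 := by
    have := hδ (x₀ + v) (by simp [hv])
    rw [add_sub_cancel_left] at this
    linarith [(abs_le.1 this).2]
  have hmem : f (x₀ + v) ∈ {y | ∃ x, ‖x - x₀‖ = δ ∧ y = f x} := ⟨x₀ + v, by simp [hv], rfl⟩
  have hmin_ge : m * δ ^ 2 - ε * δ ^ 2 ≤ minOnSphere f x₀ δ := le_csInf ⟨_, hmem⟩ hlb
  have hmin_le : minOnSphere f x₀ δ ≤ f (x₀ + v) := csInf_le ⟨_, hlb⟩ hmem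
  rw [abs_le]
  constructor <;> linarith

theorem tendsto_sloppiness {m M : ℝ} (hm : 0 < m)
    (hf : (fun x => f x - q (x - x₀)) =o[𝓝 x₀] fun x => ‖x - x₀‖ ^ 2)
    (hq_ge : ∀ v, m * ‖v‖ ^ 2 ≤ q v) (hq_le : ∀ v, q v ≤ M * ‖v‖ ^ 2)
    (hm_attained : ∀ r > 0, ∃ v, ‖v‖ = r ∧ q v ≤ m * r ^ 2)
    (hM_attained : ∀ r > 0, ∃ v, ‖v‖ = r ∧ M * r ^ 2 ≤ q v) :
    Tendsto (sloppiness f x₀) (𝓝[>] 0) (𝓝 (M / m)) := by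
  have hmM : m ≤ M := by
    obtain ⟨v, hv, -⟩ := hm_attained 1 one_pos
    simpa [hv] using (hq_ge v).trans (hq_le v)
  refine ((tendsto_maxOnClosedBall_div_sq (hm.le.trans hmM) hf hq_le hM_attained).div
    (tendsto_minOnSphere_div_sq hf hq_ge hm_attained) hm.ne').congr' ?_
  filter_upwards [self_mem_nhdsWithin] with δ (hδ : 0 < δ)
  exact div_div_div_cancel_right₀ (by positivity) _ _

end Sloppiness

theorem stmt1 {n : ℕ} (hn : 0 < n) (C : EuclideanSpace ℝ (Fin n) → ℝ)
    (θs : EuclideanSpace ℝ (Fin n)) (hC : ContDiff ℝ 2 C)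
    (hnn : ∀ θ, 0 ≤ C θ) (h0 : C θs = 0)
    (H : Matrix (Fin n) (Fin n) ℝ) (hH : H.IsHermitian)
    (hHess : ∀ v : EuclideanSpace ℝ (Fin n),
      iteratedFDeriv ℝ 2 C θs ![v, v] = ∑ i, ∑ j, v i * H i j * v j)
    (hpd : H.PosDef) :
    Filter.Tendsto
      (fun δ : ℝ =>
        sSup {x | ∃ θ : EuclideanSpace ℝ (Fin n), ‖θ - θs‖ ≤ δ ∧ x = C θ} /
          sInf {x | ∃ θ : EuclideanSpace ℝ (Fin n), ‖θ - θs‖ = δ ∧ x = C θ})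
      (nhdsWithin 0 (Set.Ioi 0))
      (nhds ((⨆ i, hH.eigenvalues i) / (⨅ i, hH.eigenvalues i))) := by
  have : Nonempty (Fin n) := ⟨⟨0, hn⟩⟩
  obtain ⟨iMax, hiMax⟩ := exists_eq_ciSup_of_finite (f := hH.eigenvalues)
  obtain ⟨iMin, hiMin⟩ := exists_eq_ciInf_of_finite (f := hH.eigenvalues)
  have hcrit : fderiv ℝ C θs = 0 :=
    IsLocalMin.fderiv_eq_zero (Eventually.of_forall fun θ => h0 ▸ hnn θ)
  let q : EuclideanSpace ℝ (Fin n) → ℝ := fun v => 2⁻¹ * ∑ i, ∑ j, v i * H i j * v j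
  have hTaylor : (fun θ => C θ - q (θ - θs)) =o[𝓝 θs] fun θ => ‖θ - θs‖ ^ 2 :=
    hC.contDiffAt.isLittleO_taylor_two.congr_left fun θ => by simp [q, h0, hcrit, hHess]
  have hq_ge (v) : 2⁻¹ * hH.eigenvalues iMin * ‖v‖ ^ 2 ≤ q v := by
    rw [mul_assoc, hiMin]
    exact mul_le_mul_of_nonneg_left (hH.iInf_eigenvalues_mul_norm_sq_le v) (by norm_num)
  have hq_le (v) : q v ≤ 2⁻¹ * hH.eigenvalues iMax * ‖v‖ ^ 2 := by
    rw [mul_assoc, hiMax]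
    exact mul_le_mul_of_nonneg_left (hH.sum_mul_mul_le_iSup_eigenvalues_mul_norm_sq v)
      (by norm_num)
  have hq_eigen (k) (r : ℝ) (hr : 0 < r) :
      ∃ v, ‖v‖ = r ∧ q v = 2⁻¹ * hH.eigenvalues k * r ^ 2 := by
    refine ⟨r • hH.eigenvectorBasis k, by rw [hH.norm_smul_eigenvectorBasis, abs_of_pos hr], ?_⟩
    simp only [q, hH.sum_mul_mul_smul_eigenvectorBasis]
    ring
  have hlim := tendsto_sloppiness (by have := hpd.eigenvalues_pos iMin; positivity) hTaylor
    hq_ge hq_le (fun r hr => (hq_eigen iMin r hr).imp fun _ h => ⟨h.1, h.2.le⟩)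
    (fun r hr => (hq_eigen iMax r hr).imp fun _ h => ⟨h.1, h.2.ge⟩)
  rwa [mul_div_mul_left _ _ (by norm_num), hiMax, hiMin] at hlim
end

section
/- Consider y(θ) = (e^{−θ₁/3} + e^{−θ₂/3}, e^{−θ₁} + e^{−θ₂}, e^{−3θ₁} + e^{−3θ₂}). If y(θ) = y(φ) for θ, φ ∈ ℝ², then {θ₁, θ₂} = {φ₁, φ₂} as multisets; i.e., either (θ₁, θ₂) = (φ₁, φ₂) or (θ₁, θ₂) = (φ₂, φ₁). -/
/-! With `a = exp (-θ₁ / 3)` and `b = exp (-θ₂ / 3)`, the first two coordinates of `yExp θ₁ θ₂`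
are `a + b` and `a³ + b³`. Since `(a + b)³ - (a³ + b³) = 3ab(a + b)` and `a + b > 0`, they determine
`a + b` and `ab`, hence the unordered pair `{a, b}`; and `x ↦ exp (-x / 3)` is injective. -/

noncomputable def yExp (θ₁ θ₂ : ℝ) : Fin 3 → ℝ :=
  ![Real.exp (-θ₁ / 3) + Real.exp (-θ₂ / 3),
    Real.exp (-θ₁) + Real.exp (-θ₂),
    Real.exp (-3 * θ₁) + Real.exp (-3 * θ₂)]

section PairFromPowerSums

variable {R : Type*} [CommRing R] [IsDomain R] {a b c d : R}

theorem eq_and_eq_or_eq_and_eq_of_add_eq_of_mul_eq (hsum : a + b = c + d) (hprod : a * b = c * d) :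
    (a = c ∧ b = d) ∨ (a = d ∧ b = c) := by
  have hroot : (a - c) * (a - d) = 0 := by linear_combination a * hsum - hprod
  rcases mul_eq_zero.1 hroot with hac | had
  · exact Or.inl ⟨sub_eq_zero.1 hac, by linear_combination hsum - hac⟩
  · exact Or.inr ⟨sub_eq_zero.1 had, by linear_combination hsum - had⟩

theorem mul_eq_mul_of_add_eq_of_add_pow_three_eq [CharZero R] (hsum : a + b = c + d)
    (hcube : a ^ 3 + b ^ 3 = c ^ 3 + d ^ 3) (hne : a + b ≠ 0) : a * b = c * d := by
  have h : (3 * (a + b)) * (a * b) = (3 * (a + b)) * (c * d) := by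
    linear_combination ((a + b) ^ 2 + (a + b) * (c + d) + (c + d) ^ 2 - 3 * c * d) * hsum - hcube
  exact mul_left_cancel₀ (mul_ne_zero (by norm_num) hne) h

end PairFromPowerSums

theorem Real.exp_div_three_pow_three (x : ℝ) : Real.exp (x / 3) ^ 3 = Real.exp x := by
  rw [← Real.exp_nat_mul]
  ring_nf

theorem stmt13 (θ₁ θ₂ φ₁ φ₂ : ℝ) (h : yExp θ₁ θ₂ = yExp φ₁ φ₂) :
    (θ₁ = φ₁ ∧ θ₂ = φ₂) ∨ (θ₁ = φ₂ ∧ θ₂ = φ₁) := by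
  set e : ℝ → ℝ := fun x ↦ Real.exp (-x / 3) with he
  have hsum : e θ₁ + e θ₂ = e φ₁ + e φ₂ := congrFun h 0
  have hcube : e θ₁ ^ 3 + e θ₂ ^ 3 = e φ₁ ^ 3 + e φ₂ ^ 3 := by
    have hcoord : Real.exp (-θ₁) + Real.exp (-θ₂) = Real.exp (-φ₁) + Real.exp (-φ₂) := congrFun h 1
    simpa only [he, Real.exp_div_three_pow_three] using hcoord
  have he_inj : Function.Injective e := fun x y hxy ↦ by
    simpa using Real.exp_injective hxy
  have hprod := mul_eq_mul_of_add_eq_of_add_pow_three_eq hsum hcube (by positivity)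
  rcases eq_and_eq_or_eq_and_eq_of_add_eq_of_mul_eq hsum hprod with ⟨h₁, h₂⟩ | ⟨h₁, h₂⟩
  · exact Or.inl ⟨he_inj h₁, he_inj h₂⟩
  · exact Or.inr ⟨he_inj h₁, he_inj h₂⟩
end
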